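/- Let (μ^t_{α,β}, R^t_ω) = (Σ_i μ^i_{α,β} t^i, Σ_i R^i_ω t^i) be a 1-parameter formal deformation of a Rota-Baxter family BiHom-Ω-associative algebra (A, μ_{α,β}, R_ω, p_ω, q_ω) of weight λ, with μ⁰ = μ, R⁰ = R. Then the pair (μ¹_{α,β}, R¹_ω) is a 2-cocycle in the cochain complex C²_{RBFA_λ}(A): that is, δ²_Alg(μ¹) = 0 and ∂¹(R¹) + Φ²(μ¹) = 0. -/

import Mathlib

open scoped BigOperators

section

variable {k Ω A : Type*} [CommRing k] [Monoid Ω] [AddCommGroup A] [Module k A]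

/-- A 1-parameter formal deformation `(μ^t, R^t) = (Σ μ^i t^i, Σ R^i t^i)` of a
Rota-Baxter family BiHom-`Ω`-associative algebra `(A, mul, R, p, q)` of weight `λ`,
expressed through the coefficientwise identities. -/
def IsFormalDeformation (lam : k)
    (mul : Ω → Ω → A →ₗ[k] A →ₗ[k] A) (R p q : Ω → A →ₗ[k] A)
    (μi : ℕ → Ω → Ω → A →ₗ[k] A →ₗ[k] A) (Ri : ℕ → Ω → A →ₗ[k] A) : Prop :=
  μi 0 = mul ∧ Ri 0 = R ∧
  (∀ i α β x y, p (α * β) (μi i α β x y) = μi i α β (p α x) (p β y)) ∧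
  (∀ i α β x y, q (α * β) (μi i α β x y) = μi i α β (q α x) (q β y)) ∧
  (∀ i ω x, p ω (Ri i ω x) = Ri i ω (p ω x)) ∧
  (∀ i ω x, q ω (Ri i ω x) = Ri i ω (q ω x)) ∧
  -- coefficientwise BiHom-`Ω`-associativity of `μ^t`
  (∀ (n : ℕ) (α β γ : Ω) (x y z : A),
    ∑ ij ∈ Finset.HasAntidiagonal.antidiagonal n, μi ij.1 (α * β) γ (μi ij.2 α β x y) (q γ z)
      = ∑ ij ∈ Finset.HasAntidiagonal.antidiagonal n, μi ij.1 α (β * γ) (p α x) (μi ij.2 β γ y z)) ∧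
  -- coefficientwise Rota-Baxter family identity of weight `λ`
  (∀ (n : ℕ) (α β : Ω) (x y : A),
    ∑ ij ∈ Finset.HasAntidiagonal.antidiagonal n, ∑ kl ∈ Finset.HasAntidiagonal.antidiagonal ij.2,
        μi ij.1 α β (Ri kl.1 α x) (Ri kl.2 β y)
      = (∑ ij ∈ Finset.HasAntidiagonal.antidiagonal n, ∑ kl ∈ Finset.HasAntidiagonal.antidiagonal ij.2,
          Ri ij.1 (α * β) (μi kl.1 α β x (Ri kl.2 β y)))
        + (∑ ij ∈ Finset.HasAntidiagonal.antidiagonal n, ∑ kl ∈ Finset.HasAntidiagonal.antidiagonal ij.2,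
            Ri ij.1 (α * β) (μi kl.1 α β (Ri kl.2 α x) y))
        + lam • ∑ ij ∈ Finset.HasAntidiagonal.antidiagonal n, Ri ij.1 (α * β) (μi ij.2 α β x y))

namespace IsFormalDeformation

variable {lam : k} {mul : Ω → Ω → A →ₗ[k] A →ₗ[k] A} {R p q : Ω → A →ₗ[k] A}
  {μi : ℕ → Ω → Ω → A →ₗ[k] A →ₗ[k] A} {Ri : ℕ → Ω → A →ₗ[k] A}

theorem assoc_coeff_one (h : IsFormalDeformation lam mul R p q μi Ri) (α β γ : Ω) (a b c : A) :
    mul (α * β) γ (μi 1 α β a b) (q γ c) + μi 1 (α * β) γ (mul α β a b) (q γ c)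
      = mul α (β * γ) (p α a) (μi 1 β γ b c) + μi 1 α (β * γ) (p α a) (mul β γ b c) := by
  obtain ⟨hμ, -, -, -, -, -, hassoc, -⟩ := h
  simpa [Finset.Nat.sum_antidiagonal_succ, hμ] using hassoc 1 α β γ a b c

theorem rotaBaxter_coeff_one (h : IsFormalDeformation lam mul R p q μi Ri) (α β : Ω) (x y : A) :
    mul α β (R α x) (Ri 1 β y) + mul α β (Ri 1 α x) (R β y) + μi 1 α β (R α x) (R β y)
      = (R (α * β) (mul α β x (Ri 1 β y)) + R (α * β) (μi 1 α β x (R β y))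
          + Ri 1 (α * β) (mul α β x (R β y)))
        + (R (α * β) (mul α β (Ri 1 α x) y) + R (α * β) (μi 1 α β (R α x) y)
          + Ri 1 (α * β) (mul α β (R α x) y))
        + (lam • R (α * β) (μi 1 α β x y) + lam • Ri 1 (α * β) (mul α β x y)) := by
  obtain ⟨hμ, hR, -, -, -, -, -, hRB⟩ := h
  simpa [Finset.Nat.sum_antidiagonal_succ, hμ, hR, add_assoc, smul_add] using hRB 1 α β x y

end IsFormalDeformation

/-- The infinitesimal `(μ¹, R¹)` of a 1-parameter formal
deformation of a Rota-Baxter family BiHom-`Ω`-associative algebra of weight `λ`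
is a 2-cocycle in `C²_{RBFA_λ}(A)`: `δ²_Alg(μ¹) = 0` and `∂¹(R¹) + Φ²(μ¹) = 0`. -/
theorem infinitesimal_is_two_cocycle (lam : k)
    (mul : Ω → Ω → A →ₗ[k] A →ₗ[k] A) (R p q : Ω → A →ₗ[k] A)
    (μi : ℕ → Ω → Ω → A →ₗ[k] A →ₗ[k] A) (Ri : ℕ → Ω → A →ₗ[k] A)
    (hdef : IsFormalDeformation lam mul R p q μi Ri) :
    -- `δ²_Alg(μ¹) = 0`
    (∀ (α β γ : Ω) (a b c : A),
      mul α (β * γ) (p α a) (μi 1 β γ b c)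
        - μi 1 (α * β) γ (mul α β a b) (q γ c)
        + μi 1 α (β * γ) (p α a) (mul β γ b c)
        - mul (α * β) γ (μi 1 α β a b) (q γ c) = 0) ∧
    -- `∂¹(R¹) + Φ²(μ¹) = 0`
    (∀ (α β : Ω) (x y : A),
      (mul α β (R α x) (Ri 1 β y) - R (α * β) (mul α β x (Ri 1 β y))
        - Ri 1 (α * β) (mul α β x (R β y) + mul α β (R α x) y + lam • mul α β x y)
        + mul α β (Ri 1 α x) (R β y) - R (α * β) (mul α β (Ri 1 α x) y))
      + (μi 1 α β (R α x) (R β y)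
        - R (α * β) (μi 1 α β (R α x) y + μi 1 α β x (R β y)
            + lam • μi 1 α β x y)) = 0) := by
  refine ⟨fun α β γ a b c => ?_, fun α β x y => ?_⟩
  · linear_combination (norm := abel) -hdef.assoc_coeff_one α β γ a b c
  · simp only [map_add, map_smul]
    linear_combination (norm := abel) hdef.rotaBaxter_coeff_one α β x y

end
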